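/- arXiv:1710.11561 — 2 statements merged into one kernel-verified Lean document; each statement's English description precedes it below -/
import Mathlib

section
/- Let $E_1$ and $E_2$ be Banach spaces, and let $A_1, A_2 : E_1 \to E_2$ be bounded (continuous) linear operators. Suppose that (i) $A_1$ is injective and the range of $A_1$ is closed in $E_2$, and (ii) $A_2$ is a compact operator. Then the range of $A_1 + A_2$ is closed in $E_2$. -/
/-!
Pass to the quotient by `ker (A₁ + A₂)`: it suffices that the induced injective map is bounded
below there. Otherwise there are unit vectors `qₙ` of the quotient with `(A₁ + A₂) qₙ → 0`; lift
them to a bounded sequence `xₙ`. Along a subsequence `A₂ xₙ` converges by compactness, hence so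
does `A₁ xₙ`, and since `A₁` is bounded below, so does `xₙ`, to a point `p` of the kernel. Then
`qₙ → [p] = 0` along that subsequence, contradicting `‖qₙ‖ = 1`.
-/

open Bornology Filter Set Topology
open scoped NNReal

section NontriviallyNormedField

variable {𝕜 E F : Type*} [NontriviallyNormedField 𝕜]
  [NormedAddCommGroup E] [NormedSpace 𝕜 E] [NormedAddCommGroup F] [NormedSpace 𝕜 F]

theorem AntilipschitzWith.tendsto_subseq_of_add_isCompactOperator [CompleteSpace E]
    {A₁ A₂ : E →L[𝕜] F} {K : ℝ≥0} (h₁ : AntilipschitzWith K A₁) (h₂ : IsCompactOperator A₂)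
    {x : ℕ → E} (hx : IsBounded (range x)) {y : F}
    (hy : Tendsto (fun n ↦ (A₁ + A₂) (x n)) atTop (𝓝 y)) :
    ∃ p, ∃ φ : ℕ → ℕ, StrictMono φ ∧ Tendsto (x ∘ φ) atTop (𝓝 p) := by
  obtain ⟨C, hC, hAC⟩ := h₂.image_subset_compact_of_bounded (f := (A₂ : E →ₗ[𝕜] F)) hx
  obtain ⟨w, -, φ, hφ, hw⟩ := hC.tendsto_subseq (x := fun n ↦ A₂ (x n))
    fun n ↦ hAC ⟨x n, mem_range_self n, rfl⟩
  have hA₁ : Tendsto (A₁ ∘ x ∘ φ) atTop (𝓝 (y - w)) := by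
    simpa [Function.comp_def] using (hy.comp hφ.tendsto_atTop).sub hw
  have hemb := h₁.isClosedEmbedding A₁.uniformContinuous
  obtain ⟨p, hp⟩ : y - w ∈ range A₁ :=
    hemb.isClosed_range.mem_of_tendsto hA₁ (Eventually.of_forall fun n ↦ mem_range_self _)
  exact ⟨p, φ, hφ, hemb.tendsto_nhds_iff.mpr (hp ▸ hA₁)⟩

namespace ContinuousLinearMap

def kerLift (T : E →L[𝕜] F) : E ⧸ (T : E →ₗ[𝕜] F).ker →L[𝕜] F :=
  Submodule.liftQL _ T le_rfl

@[simp]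
theorem kerLift_mk (T : E →L[𝕜] F) (x : E) : T.kerLift (Submodule.Quotient.mk x) = T x := rfl

theorem range_kerLift (T : E →L[𝕜] F) : range T.kerLift = range T :=
  ((Submodule.Quotient.mk_surjective _).range_comp T.kerLift).symm

theorem isClosed_range_of_antilipschitz_kerLift [CompleteSpace E] (T : E →L[𝕜] F) {K : ℝ≥0}
    (hT : AntilipschitzWith K T.kerLift) : IsClosed (range T) :=
  T.range_kerLift ▸ hT.isClosed_range T.kerLift.uniformContinuous

end ContinuousLinearMap

end NontriviallyNormedField

section RCLike

variable {𝕜 E F : Type*} [RCLike 𝕜]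

theorem ContinuousLinearMap.exists_norm_eq_one_tendsto_zero_of_not_antilipschitz
    [SeminormedAddCommGroup E] [NormedSpace 𝕜 E] [SeminormedAddCommGroup F] [NormedSpace 𝕜 F]
    (f : E →L[𝕜] F) (hf : ¬ ∃ K, AntilipschitzWith K f) :
    ∃ x : ℕ → E, (∀ n, ‖x n‖ = 1) ∧ Tendsto (f ∘ x) atTop (𝓝 0) := by
  rw [antilipschitzWith_iff_exists_mul_le_norm] at hf
  push Not at hf
  have (n : ℕ) : ∃ x, ‖x‖ = 1 ∧ ‖f x‖ < 1 / (n + 1) := by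
    obtain ⟨x, hx⟩ := hf (1 / (n + 1)) (by positivity)
    have hx0 : 0 < ‖x‖ := pos_of_mul_pos_right ((norm_nonneg _).trans_lt hx) (by positivity)
    refine ⟨(‖x‖⁻¹ : 𝕜) • x, ?_, ?_⟩
    · simp [norm_smul, hx0.ne']
    · rw [map_smul, norm_smul, norm_inv, RCLike.norm_ofReal, abs_norm, inv_mul_lt_iff₀ hx0]
      linarith
  choose x hx1 hfx using this
  exact ⟨x, hx1, squeeze_zero_norm (fun n ↦ (hfx n).le) tendsto_one_div_add_atTop_nhds_zero_nat⟩

theorem AntilipschitzWith.exists_antilipschitz_kerLift_add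
    [NormedAddCommGroup E] [NormedSpace 𝕜 E] [CompleteSpace E]
    [NormedAddCommGroup F] [NormedSpace 𝕜 F]
    {A₁ A₂ : E →L[𝕜] F} {K : ℝ≥0} (h₁ : AntilipschitzWith K A₁) (h₂ : IsCompactOperator A₂) :
    ∃ K', AntilipschitzWith K' (A₁ + A₂).kerLift := by
  set T := A₁ + A₂
  by_contra h
  obtain ⟨q, hq1, hTq⟩ := T.kerLift.exists_norm_eq_one_tendsto_zero_of_not_antilipschitz h
  have (n : ℕ) : ∃ x, Submodule.Quotient.mk x = q n ∧ ‖x‖ < 2 := by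
    simpa [hq1, one_add_one_eq_two] using Submodule.Quotient.norm_mk_lt (q n) one_pos
  choose x hxq hx2 using this
  have hx : IsBounded (range x) :=
    isBounded_iff_forall_norm_le.2 ⟨2, by rintro _ ⟨n, rfl⟩; exact (hx2 n).le⟩
  have hTx : Tendsto (fun n ↦ T (x n)) atTop (𝓝 0) := by
    simpa [Function.comp_def, ← hxq] using hTq
  obtain ⟨p, φ, hφ, hxp⟩ := h₁.tendsto_subseq_of_add_isCompactOperator h₂ hx hTx
  have hp : p ∈ (T : E →ₗ[𝕜] F).ker :=
    tendsto_nhds_unique ((T.continuous.tendsto p).comp hxp) (hTx.comp hφ.tendsto_atTop)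
  have hq0 : Tendsto (q ∘ φ) atTop (𝓝 0) := by
    have := ((Submodule.mkQL (T : E →ₗ[𝕜] F).ker).continuous.tendsto p).comp hxp
    simpa [Function.comp_def, hxq, (Submodule.Quotient.mk_eq_zero _).2 hp] using this
  simpa [hq1] using hq0.norm

end RCLike

/-- If `A₁ : E₁ → E₂` is a bounded linear operator between Banach spaces which is
injective with closed range, and `A₂ : E₁ → E₂` is a compact bounded linear operator,
then the range of `A₁ + A₂` is closed in `E₂`. -/
theorem closed_range_of_injective_closed_range_add_compact
    {E₁ E₂ : Type*} [NormedAddCommGroup E₁] [NormedSpace ℝ E₁] [CompleteSpace E₁]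
    [NormedAddCommGroup E₂] [NormedSpace ℝ E₂] [CompleteSpace E₂]
    (A₁ A₂ : E₁ →L[ℝ] E₂)
    (h_inj : Function.Injective A₁)
    (h_closed : IsClosed (Set.range A₁))
    (h_cpt : IsCompactOperator A₂) :
    IsClosed (Set.range (A₁ + A₂)) := by
  obtain ⟨K, hK⟩ := A₁.antilipschitz_of_injective_of_isClosed_range h_inj h_closed
  obtain ⟨K', hK'⟩ := hK.exists_antilipschitz_kerLift_add h_cpt
  exact (A₁ + A₂).isClosed_range_of_antilipschitz_kerLift hK'
end

section
/- Let $g \geq 0$ and $n \geq 1$ be natural numbers, and let $m_1 \geq m_2 \geq \cdots \geq m_n \geq 2$ be natural numbers satisfying $2 - 2g = \sum_{i=1}^n \left(1 - \frac{1}{m_i}\right)$ as rational numbers. Then $g = 0$ and the tuple $(m_1, \ldots, m_n)$ is one of exactly four possibilities: $(2,2,2,2)$ (with $n = 4$), or $(4,4,2)$, $(6,3,2)$, $(3,3,3)$ (with $n = 3$). -/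
/-!
Each term `1 - 1/mᵢ` lies in `[1/2, 1)`, so `n/2 ≤ 2 - 2g < n`. As `n ≥ 1` this forces
`2 - 2g > 0`, i.e. `g = 0`, and then `n ∈ {3, 4}`. For `n = 4` the lower bound is attained,
so every `mᵢ = 2`. For `n = 3` the equation reads `1/m₁ + 1/m₂ + 1/m₃ = 1`; since `m₃` is
the smallest, `1 ≤ 3/m₃` gives `m₃ ≤ 3`, and for each value of `m₃` the same argument
bounds `m₂`, after which `m₁` is determined.
-/

lemma one_half_le_one_sub_one_div {K : Type*} [Field K] [LinearOrder K] [IsStrictOrderedRing K]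
    {x : K} (hx : 2 ≤ x) : 1 / 2 ≤ 1 - 1 / x := by
  linarith [one_div_le_one_div_of_le two_pos hx]

section
variable {ι : Type*} {s : Finset ι} {m : ι → ℕ}

lemma card_div_two_le_sum_one_sub_one_div (hm : ∀ i ∈ s, 2 ≤ m i) :
    (s.card : ℚ) / 2 ≤ ∑ i ∈ s, (1 - 1 / (m i : ℚ)) := by
  have := s.card_nsmul_le_sum (fun i => 1 - 1 / (m i : ℚ)) _ fun i hi =>
    one_half_le_one_sub_one_div (by exact_mod_cast hm i hi)
  rwa [nsmul_eq_mul, ← div_eq_mul_one_div] at this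

lemma sum_one_sub_one_div_lt_card (hs : s.Nonempty) (hm : ∀ i ∈ s, 0 < m i) :
    ∑ i ∈ s, (1 - 1 / (m i : ℚ)) < s.card := by
  have := Finset.sum_lt_sum_of_nonempty hs fun i hi =>
    sub_lt_self (1 : ℚ) (one_div_pos.2 (Nat.cast_pos.2 (hm i hi)))
  simpa using this

lemma eq_two_of_sum_one_sub_one_div_eq_card_div_two (hm : ∀ i ∈ s, 2 ≤ m i)
    (h : ∑ i ∈ s, (1 - 1 / (m i : ℚ)) = s.card / 2) : ∀ i ∈ s, m i = 2 := by
  rw [div_eq_mul_one_div, ← nsmul_eq_mul, ← Finset.sum_const] at h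
  intro i hi
  have hi' := (Finset.sum_eq_sum_iff_of_le fun i hi => one_half_le_one_sub_one_div (K := ℚ)
    (by exact_mod_cast hm i hi)).1 h.symm i hi
  have : (m i : ℚ) = 2 := by
    have : (m i : ℚ) ≠ 0 := Nat.cast_ne_zero.2 (by linarith [hm i hi])
    field_simp at hi'
    linarith
  exact_mod_cast this

end

lemma eq_of_one_div_add_one_div_add_one_div_eq_one {a b c : ℕ} (hba : b ≤ a) (hcb : c ≤ b)
    (hc : 2 ≤ c) (h : (1 : ℚ) / a + 1 / b + 1 / c = 1) :
    (a = 4 ∧ b = 4 ∧ c = 2) ∨ (a = 6 ∧ b = 3 ∧ c = 2) ∨ (a = 3 ∧ b = 3 ∧ c = 3) := by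
  have hab : 0 < a * b := Nat.mul_pos (by omega) (by omega)
  have hcleared : b * c + a * c + a * b = a * b * c := by
    have : (a : ℚ) ≠ 0 := Nat.cast_ne_zero.2 (by omega)
    have : (b : ℚ) ≠ 0 := Nat.cast_ne_zero.2 (by omega)
    have : (c : ℚ) ≠ 0 := Nat.cast_ne_zero.2 (by omega)
    field_simp at h
    exact_mod_cast (by linear_combination h : (b * c + a * c + a * b : ℚ) = a * b * c)
  have hbc : b * c ≤ a * b := Nat.mul_le_mul hba hcb
  have hac : a * c ≤ a * b := Nat.mul_le_mul_left a hcb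
  have hc3 : c ≤ 3 := Nat.le_of_mul_le_mul_left (c := a * b) (by linarith) hab
  interval_cases c
  · have hb4 : b ≤ 4 := Nat.le_of_mul_le_mul_left (c := a) (by linarith) (by omega)
    interval_cases b <;> omega
  · obtain rfl : b = 3 := le_antisymm
      (Nat.le_of_mul_le_mul_left (c := a) (by linarith) (by omega)) hcb
    omega

/-- Classification of elliptic orbifold signatures: if `g ≥ 0`, `n ≥ 1`,
`m : Fin n → ℕ` is nonincreasing with `m i ≥ 2` for all `i`, and
`2 - 2g = ∑ i, (1 - 1/(m i))` as rationals, then `g = 0` and the tuple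
`(m 1, …, m n)` is `(2,2,2,2)`, `(4,4,2)`, `(6,3,2)`, or `(3,3,3)`. -/
theorem elliptic_orbifold_signature_classification
    (g n : ℕ) (hn : 1 ≤ n) (m : Fin n → ℕ)
    (hmono : ∀ i j : Fin n, i ≤ j → m j ≤ m i)
    (hm : ∀ i, 2 ≤ m i)
    (h : (2 : ℚ) - 2 * g = ∑ i, (1 - 1 / (m i : ℚ))) :
    g = 0 ∧
      (List.ofFn m = [2, 2, 2, 2] ∨ List.ofFn m = [4, 4, 2] ∨
        List.ofFn m = [6, 3, 2] ∨ List.ofFn m = [3, 3, 3]) := by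
  have hlo := card_div_two_le_sum_one_sub_one_div fun i (_ : i ∈ Finset.univ) => hm i
  have hhi := sum_one_sub_one_div_lt_card (Finset.univ_nonempty_iff.2 ⟨⟨0, hn⟩⟩)
    fun i _ => (by linarith [hm i] : 0 < m i)
  rw [Finset.card_univ, Fintype.card_fin, ← h] at hlo hhi
  obtain rfl : g = 0 := by
    have hn' : (1 : ℚ) ≤ n := by exact_mod_cast hn
    have : g < 1 := by exact_mod_cast (by linarith : (g : ℚ) < 1)
    omega
  refine ⟨rfl, ?_⟩
  push_cast at hlo hhi
  obtain rfl | rfl : n = 3 ∨ n = 4 := by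
    have : n ≤ 4 := by exact_mod_cast (by linarith : (n : ℚ) ≤ 4)
    have : 2 < n := by exact_mod_cast (by linarith : (2 : ℚ) < n)
    omega
  · rw [Fin.sum_univ_three] at h
    obtain ⟨h0, h1, h2⟩ | ⟨h0, h1, h2⟩ | ⟨h0, h1, h2⟩ :=
      eq_of_one_div_add_one_div_add_one_div_eq_one (hmono 0 1 (by decide))
        (hmono 1 2 (by decide)) (hm 2) (by push_cast at h; linarith)
    all_goals simp [List.ofFn_succ, h0, h1, h2]
  · have h2 := eq_two_of_sum_one_sub_one_div_eq_card_div_two (s := Finset.univ)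
      (fun i _ => hm i) (by rw [← h]; norm_num)
    simp [List.ofFn_succ, h2]
end
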